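/- Let K be a bounded operator on H₁ and L a bounded operator on H₂. Let {xₙ}ₙ≥1 be a K-frame for H₁ and {yₙ}ₙ≥1 an L-frame for H₂, with analysis operators θ₁ and θ₂ respectively. If the closure of the range of θ₁ equals the orthogonal complement of the range of θ₂ in ℓ², then {xₙ ⊕ yₙ}ₙ≥1 is a K ⊕ L-minimal frame for H₁ ⊕ H₂, i.e. a K ⊕ L-frame whose synthesis operator is injective. -/

import Mathlib

/-! The analysis coefficients of `u ⊕ w` against `xₙ ⊕ yₙ` are `θ₁ u + θ₂ w`. Since the ranges of
`θ₁` and `θ₂` are orthogonal, Pythagoras splits the frame sum of `{xₙ ⊕ yₙ}` into those of `{xₙ}`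
and `{yₙ}`, and the two frame inequalities add up to the `K ⊕ L` ones. If the synthesis operator
kills `a`, then `ā` is orthogonal to both ranges; it thus lies in `R(θ₂)^⊥ = cl R(θ₁)` and is
orthogonal to it, hence `ā = 0`. -/

noncomputable section

open scoped ENNReal

/-- The sequence of direct sums `xₙ ⊕ yₙ` in the super Hilbert space `H₁ ⊕ H₂`,
realized as `WithLp 2 (H₁ × H₂)`. -/
def pairSeq {H₁ H₂ : Type*} [NormedAddCommGroup H₁] [NormedAddCommGroup H₂]
    (x : ℕ → H₁) (y : ℕ → H₂) : ℕ → WithLp 2 (H₁ × H₂) :=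
  fun n => (WithLp.equiv 2 (H₁ × H₂)).symm (x n, y n)

/-- A sequence `{xₙ}` is a Bessel sequence: there is `B > 0` with
`∑ₙ |⟨v, xₙ⟩|² ≤ B‖v‖²` for all `v` (in particular the series converges). -/
def IsBessel {H : Type*} [NormedAddCommGroup H] [InnerProductSpace ℂ H] (x : ℕ → H) : Prop :=
  ∃ B : ℝ, 0 < B ∧ ∀ v : H, Summable (fun n => ‖(inner ℂ v (x n) : ℂ)‖ ^ 2) ∧
    ∑' n, ‖(inner ℂ v (x n) : ℂ)‖ ^ 2 ≤ B * ‖v‖ ^ 2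

/-- A sequence `{xₙ}` is a `K`-frame: there are `A, B > 0` with
`A‖K*v‖² ≤ ∑ₙ |⟨v, xₙ⟩|² ≤ B‖v‖²` for all `v`. -/
def IsKFrame {H : Type*} [NormedAddCommGroup H] [InnerProductSpace ℂ H] [CompleteSpace H]
    (K : H →L[ℂ] H) (x : ℕ → H) : Prop :=
  ∃ A B : ℝ, 0 < A ∧ 0 < B ∧ ∀ v : H, Summable (fun n => ‖(inner ℂ v (x n) : ℂ)‖ ^ 2) ∧
    A * ‖K.adjoint v‖ ^ 2 ≤ ∑' n, ‖(inner ℂ v (x n) : ℂ)‖ ^ 2 ∧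
    ∑' n, ‖(inner ℂ v (x n) : ℂ)‖ ^ 2 ≤ B * ‖v‖ ^ 2

/-- The operator `K ⊕ L` on the super Hilbert space `H₁ ⊕ H₂`,
`(K ⊕ L)(x ⊕ y) = Kx ⊕ Ly`. -/
def dsum {H₁ H₂ : Type*}
    [NormedAddCommGroup H₁] [InnerProductSpace ℂ H₁]
    [NormedAddCommGroup H₂] [InnerProductSpace ℂ H₂]
    (K : H₁ →L[ℂ] H₁) (L : H₂ →L[ℂ] H₂) :
    WithLp 2 (H₁ × H₂) →L[ℂ] WithLp 2 (H₁ × H₂) :=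
  ((WithLp.prodContinuousLinearEquiv 2 ℂ H₁ H₂).symm : (H₁ × H₂) →L[ℂ] WithLp 2 (H₁ × H₂)) ∘L
    (K.prodMap L) ∘L
    ((WithLp.prodContinuousLinearEquiv 2 ℂ H₁ H₂) : WithLp 2 (H₁ × H₂) →L[ℂ] (H₁ × H₂))

open scoped InnerProductSpace

section lp

variable {ι 𝕜 : Type*} [RCLike 𝕜]

lemma lp.hasSum_norm_sq {E : ι → Type*} [∀ i, NormedAddCommGroup (E i)] (f : lp E 2) :
    HasSum (fun i => ‖f i‖ ^ 2) (‖f‖ ^ 2) := by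
  have h := lp.hasSum_norm (p := 2) (by norm_num) f
  simp only [ENNReal.toReal_ofNat, Real.rpow_two] at h
  exact h

lemma lp.hasSum_mul_of_star (a f : lp (fun _ : ι => 𝕜) 2) :
    HasSum (fun i => a i * f i) ⟪star a, f⟫_𝕜 := by
  have h := lp.hasSum_inner (𝕜 := 𝕜) (star a) f
  simp only [lp.star_apply, RCLike.inner_apply, RCLike.star_def, RCLike.conj_conj] at h
  simpa only [mul_comm] using h

end lp

section InnerProductSpace

variable {𝕜 E : Type*} [RCLike 𝕜] [NormedAddCommGroup E] [InnerProductSpace 𝕜 E]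

lemma HasSum.mul_inner_right {ι : Type*} {z : ι → E} {a : ι → 𝕜} {s : E}
    (h : HasSum (fun i => a i • z i) s) (w : E) :
    HasSum (fun i => a i * ⟪w, z i⟫_𝕜) ⟪w, s⟫_𝕜 := by
  simpa [inner_smul_right] using (innerSL 𝕜 w).hasSum h

lemma eq_zero_of_inner_eq_zero_of_closure_eq_orthogonal {S U : Set E}
    (hSU : closure S = {a | ∀ b ∈ U, ⟪a, b⟫_𝕜 = 0}) {v : E}
    (hS : ∀ s ∈ S, ⟪v, s⟫_𝕜 = 0) (hU : ∀ u ∈ U, ⟪v, u⟫_𝕜 = 0) : v = 0 := by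
  have hv : v ∈ closure S := hSU ▸ hU
  have hclosure : closure S ⊆ {c | ⟪v, c⟫_𝕜 = 0} :=
    closure_minimal hS (isClosed_eq (continuous_const.inner continuous_id) continuous_const)
  exact inner_self_eq_zero.1 (hclosure hv)

lemma hasSum_norm_inner_sq_of_analysis {x : ℕ → E} {θ : E → lp (fun _ : ℕ => 𝕜) 2}
    (hθ : ∀ u n, θ u n = ⟪u, x n⟫_𝕜) (u : E) :
    HasSum (fun n => ‖⟪u, x n⟫_𝕜‖ ^ 2) (‖θ u‖ ^ 2) := by
  simpa only [hθ] using lp.hasSum_norm_sq (θ u)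

end InnerProductSpace

section pairSeq

variable {𝕜 E F : Type*} [RCLike 𝕜]
  [NormedAddCommGroup E] [InnerProductSpace 𝕜 E] [NormedAddCommGroup F] [InnerProductSpace 𝕜 F]
  {x : ℕ → E} {y : ℕ → F}

lemma inner_pairSeq (v : WithLp 2 (E × F)) (n : ℕ) :
    ⟪v, pairSeq x y n⟫_𝕜 = ⟪v.fst, x n⟫_𝕜 + ⟪v.snd, y n⟫_𝕜 :=
  WithLp.prod_inner_apply v _

lemma hasSum_norm_inner_pairSeq_sq {θ₁ : E → lp (fun _ : ℕ => 𝕜) 2}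
    {θ₂ : F → lp (fun _ : ℕ => 𝕜) 2} (hθ₁ : ∀ u n, θ₁ u n = ⟪u, x n⟫_𝕜)
    (hθ₂ : ∀ w n, θ₂ w n = ⟪w, y n⟫_𝕜) (horth : ∀ u w, ⟪θ₁ u, θ₂ w⟫_𝕜 = 0)
    (v : WithLp 2 (E × F)) :
    HasSum (fun n => ‖⟪v, pairSeq x y n⟫_𝕜‖ ^ 2)
      ((∑' n, ‖⟪v.fst, x n⟫_𝕜‖ ^ 2) + ∑' n, ‖⟪v.snd, y n⟫_𝕜‖ ^ 2) := by
  have hpyth : ‖θ₁ v.fst + θ₂ v.snd‖ ^ 2 = ‖θ₁ v.fst‖ ^ 2 + ‖θ₂ v.snd‖ ^ 2 := by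
    simpa only [sq] using norm_add_sq_eq_norm_sq_add_norm_sq_of_inner_eq_zero _ _ (horth _ _)
  rw [(hasSum_norm_inner_sq_of_analysis hθ₁ v.fst).tsum_eq,
    (hasSum_norm_inner_sq_of_analysis hθ₂ v.snd).tsum_eq, ← hpyth]
  simpa only [inner_pairSeq, lp.coeFn_add, Pi.add_apply, hθ₁, hθ₂] using
    lp.hasSum_norm_sq (θ₁ v.fst + θ₂ v.snd)

lemma injective_of_hasSum_smul_pairSeq {θ₁ : E → lp (fun _ : ℕ => 𝕜) 2}
    {θ₂ : F → lp (fun _ : ℕ => 𝕜) 2} (hθ₁ : ∀ u n, θ₁ u n = ⟪u, x n⟫_𝕜)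
    (hθ₂ : ∀ w n, θ₂ w n = ⟪w, y n⟫_𝕜)
    (hperp : closure (Set.range θ₁) = {a | ∀ b ∈ Set.range θ₂, ⟪a, b⟫_𝕜 = 0})
    {T : lp (fun _ : ℕ => 𝕜) 2 →L[𝕜] WithLp 2 (E × F)}
    (hT : ∀ a, HasSum (fun n => a n • pairSeq x y n) (T a)) : Function.Injective T := by
  refine (injective_iff_map_eq_zero T).2 fun a ha => ?_
  have hsyn (v : WithLp 2 (E × F)) :
      HasSum (fun n => a n * (⟪v.fst, x n⟫_𝕜 + ⟪v.snd, y n⟫_𝕜)) 0 := by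
    simpa only [ha, inner_pairSeq, inner_zero_right] using (hT a).mul_inner_right v
  have h₁ : ∀ b ∈ Set.range θ₁, ⟪star a, b⟫_𝕜 = 0 := by
    rintro _ ⟨u, rfl⟩
    refine (lp.hasSum_mul_of_star a (θ₁ u)).unique ?_
    simpa [hθ₁] using hsyn (WithLp.toLp 2 (u, 0))
  have h₂ : ∀ b ∈ Set.range θ₂, ⟪star a, b⟫_𝕜 = 0 := by
    rintro _ ⟨w, rfl⟩
    refine (lp.hasSum_mul_of_star a (θ₂ w)).unique ?_
    simpa [hθ₂] using hsyn (WithLp.toLp 2 (0, w))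
  simpa using eq_zero_of_inner_eq_zero_of_closure_eq_orthogonal hperp h₁ h₂

end pairSeq

section dsum

variable {E F : Type*} [NormedAddCommGroup E] [InnerProductSpace ℂ E]
  [NormedAddCommGroup F] [InnerProductSpace ℂ F]

@[simp]
lemma dsum_apply_fst (K : E →L[ℂ] E) (L : F →L[ℂ] F) (v : WithLp 2 (E × F)) :
    (dsum K L v).fst = K v.fst :=
  rfl

@[simp]
lemma dsum_apply_snd (K : E →L[ℂ] E) (L : F →L[ℂ] F) (v : WithLp 2 (E × F)) :
    (dsum K L v).snd = L v.snd :=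
  rfl

lemma adjoint_dsum [CompleteSpace E] [CompleteSpace F] (K : E →L[ℂ] E) (L : F →L[ℂ] F) :
    (dsum K L).adjoint = dsum K.adjoint L.adjoint := by
  refine ((ContinuousLinearMap.eq_adjoint_iff _ _).2 fun a b => ?_).symm
  simp [WithLp.prod_inner_apply, ContinuousLinearMap.adjoint_inner_left]

lemma IsKFrame.pairSeq_of_hasSum [CompleteSpace E] [CompleteSpace F] {K : E →L[ℂ] E}
    {L : F →L[ℂ] F} {x : ℕ → E} {y : ℕ → F}
    (hx : IsKFrame K x) (hy : IsKFrame L y)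
    (hsum : ∀ v : WithLp 2 (E × F), HasSum (fun n => ‖⟪v, pairSeq x y n⟫_ℂ‖ ^ 2)
      ((∑' n, ‖⟪v.fst, x n⟫_ℂ‖ ^ 2) + ∑' n, ‖⟪v.snd, y n⟫_ℂ‖ ^ 2)) :
    IsKFrame (dsum K L) (pairSeq x y) := by
  obtain ⟨A₁, B₁, hA₁, hB₁, hx⟩ := hx
  obtain ⟨A₂, B₂, hA₂, hB₂, hy⟩ := hy
  refine ⟨min A₁ A₂, B₁ + B₂, lt_min hA₁ hA₂, add_pos hB₁ hB₂, fun v => ?_⟩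
  obtain ⟨-, hl₁, hu₁⟩ := hx v.fst
  obtain ⟨-, hl₂, hu₂⟩ := hy v.snd
  rw [(hsum v).tsum_eq, adjoint_dsum, WithLp.prod_norm_sq_eq_of_L2 (dsum _ _ v),
    WithLp.prod_norm_sq_eq_of_L2 v, dsum_apply_fst, dsum_apply_snd]
  refine ⟨(hsum v).summable, ?_, ?_⟩
  · calc min A₁ A₂ * (‖K.adjoint v.fst‖ ^ 2 + ‖L.adjoint v.snd‖ ^ 2)
        ≤ A₁ * ‖K.adjoint v.fst‖ ^ 2 + A₂ * ‖L.adjoint v.snd‖ ^ 2 := by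
          rw [mul_add]
          gcongr
          exacts [min_le_left A₁ A₂, min_le_right A₁ A₂]
      _ ≤ _ := add_le_add hl₁ hl₂
  · calc _ ≤ B₁ * ‖v.fst‖ ^ 2 + B₂ * ‖v.snd‖ ^ 2 := add_le_add hu₁ hu₂
      _ ≤ (B₁ + B₂) * (‖v.fst‖ ^ 2 + ‖v.snd‖ ^ 2) := by
          nlinarith [mul_nonneg hB₁.le (sq_nonneg ‖v.snd‖), mul_nonneg hB₂.le (sq_nonneg ‖v.fst‖)]

end dsum

variable {H₁ H₂ : Type*}
  [NormedAddCommGroup H₁] [InnerProductSpace ℂ H₁] [CompleteSpace H₁]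
  [TopologicalSpace.SeparableSpace H₁]
  [NormedAddCommGroup H₂] [InnerProductSpace ℂ H₂] [CompleteSpace H₂]
  [TopologicalSpace.SeparableSpace H₂]

/-- if `{xₙ}` is a `K`-frame for `H₁` and `{yₙ}` is an `L`-frame for `H₂` whose
analysis operators `θ₁, θ₂` satisfy `cl(R(θ₁)) = R(θ₂)^⊥` in `ℓ²`, then `{xₙ ⊕ yₙ}` is a
`K ⊕ L`-minimal frame for `H₁ ⊕ H₂`: a `K ⊕ L`-frame whose synthesis operator is injective. -/
theorem pair_kframe_minimal_of_closure_range (K : H₁ →L[ℂ] H₁) (L : H₂ →L[ℂ] H₂)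
    (x : ℕ → H₁) (y : ℕ → H₂)
    (hx : IsKFrame K x) (hy : IsKFrame L y)
    (θ₁ : H₁ → lp (fun _ : ℕ => ℂ) 2)
    (hθ₁ : ∀ (u : H₁) (n : ℕ), θ₁ u n = (inner ℂ u (x n) : ℂ))
    (θ₂ : H₂ → lp (fun _ : ℕ => ℂ) 2)
    (hθ₂ : ∀ (v : H₂) (n : ℕ), θ₂ v n = (inner ℂ v (y n) : ℂ))
    (hperp : closure (Set.range θ₁) =
      {a : lp (fun _ : ℕ => ℂ) 2 | ∀ b ∈ Set.range θ₂, (inner ℂ a b : ℂ) = 0})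
    (T : lp (fun _ : ℕ => ℂ) 2 →L[ℂ] WithLp 2 (H₁ × H₂))
    (hT : ∀ a : lp (fun _ : ℕ => ℂ) 2, HasSum (fun n => a n • pairSeq x y n) (T a)) :
    IsKFrame (dsum K L) (pairSeq x y) ∧ Function.Injective T := by
  have horth : ∀ u w, ⟪θ₁ u, θ₂ w⟫_ℂ = 0 := fun u w =>
    hperp.subset (subset_closure (Set.mem_range_self u)) (θ₂ w) (Set.mem_range_self w)
  exact ⟨hx.pairSeq_of_hasSum hy (hasSum_norm_inner_pairSeq_sq hθ₁ hθ₂ horth),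
    injective_of_hasSum_smul_pairSeq hθ₁ hθ₂ hperp hT⟩
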